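/- (Sparse representation of the final state.) With the query model as defined in the context, suppose 0 ≤ q ≤ N−1 and suppose V is nontrivial. Then the final state ψ := (A_q ⊗ id) ∘ c𝔘 ∘ (A_{q−1} ⊗ id) ∘ ⋯ ∘ c𝔘 ∘ (A_0 ⊗ id) applied to (φ₀ ⊗ 0̂) can be written as ψ = ∑_{k=0}^{q} α_k • (ψ_k ⊗ k̂), where each ψ_k ∈ H is a unit vector, the α_k are complex numbers with ∑_{k=0}^{q} |α_k|² = 1, and k̂ is the k-th Fourier basis vector. -/

import Mathlib

open scoped Kronecker

noncomputable section

/-- `ω N = exp(2πi/N)`, the primitive `N`-th root of unity. -/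
def ω (N : ℕ) : ℂ := Complex.exp (2 * Real.pi * Complex.I / N)

/-- The computational (standard) basis vector `e_y` of `EuclideanSpace ℂ (Fin N)`. -/
def e (N : ℕ) (y : Fin N) : EuclideanSpace ℂ (Fin N) := EuclideanSpace.single y 1

/-- The Fourier basis vector `k̂ = (1/√N) ∑_y ω_N^{k·y} • e_y`. -/
def fHat (N : ℕ) (k : Fin N) : EuclideanSpace ℂ (Fin N) :=
  (↑(Real.sqrt N))⁻¹ • ∑ y : Fin N, ω N ^ ((k : ℕ) * (y : ℕ)) • e N y

/-- The tensor product of two Euclidean vectors, realized concretely: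
`(x ⊗ z) (i, j) = x i * z j`. -/
def tp {ι κ : Type*} [Fintype ι] [Fintype κ]
    (x : EuclideanSpace ℂ ι) (z : EuclideanSpace ℂ κ) : EuclideanSpace ℂ (ι × κ) :=
  (EuclideanSpace.equiv (ι × κ) ℂ).symm fun p => x p.1 * z p.2

variable {ιV ιW : Type*} [Fintype ιV] [DecidableEq ιV] [Fintype ιW] [DecidableEq ιW]

/-- The matrix `|u⟩⟨u|` of the orthogonal projection `P_u` onto `ℂ ∙ u`
(for a unit vector `u`). -/
def PuM (u : EuclideanSpace ℂ ιV) : Matrix ιV ιV ℂ :=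
  Matrix.of fun i j => u i * star (u j)

/-- The matrix of `U_y = ω_N^y • P_u + (id - P_u)` on `V`. -/
def UyM (N : ℕ) (u : EuclideanSpace ℂ ιV) (y : Fin N) : Matrix ιV ιV ℂ :=
  ω N ^ (y : ℕ) • PuM u + (1 - PuM u)

/-- The matrix of the controlled unitary `cU_y = |0⟩⟨0| ⊗ id_V + |1⟩⟨1| ⊗ U_y` on `ℂ² ⊗ V`. -/
def cUyM (N : ℕ) (u : EuclideanSpace ℂ ιV) (y : Fin N) : Matrix (Fin 2 × ιV) (Fin 2 × ιV) ℂ :=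
  Matrix.single 0 0 (1 : ℂ) ⊗ₖ (1 : Matrix ιV ιV ℂ)
    + Matrix.single 1 1 (1 : ℂ) ⊗ₖ UyM N u y

/-- The matrix of the coherent oracle `c𝔘 = ∑_y (cU_y ⊗ id_W) ⊗ |e_y⟩⟨e_y|` on
`H ⊗ EuclideanSpace ℂ (Fin N)`, where `H = ℂ² ⊗ V ⊗ W`. -/
def oracleM (N : ℕ) (u : EuclideanSpace ℂ ιV) (ιW : Type*) [Fintype ιW] [DecidableEq ιW] :
    Matrix (((Fin 2 × ιV) × ιW) × Fin N) (((Fin 2 × ιV) × ιW) × Fin N) ℂ :=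
  ∑ y : Fin N, (cUyM N u y ⊗ₖ (1 : Matrix ιW ιW ℂ)) ⊗ₖ Matrix.single y y (1 : ℂ)

end

noncomputable section

/-- The total operator (as a matrix) of a `q`-query algorithm:
`algOp A orc q = (A_q ⊗ id) * orc * (A_{q-1} ⊗ id) * ⋯ * orc * (A_0 ⊗ id)`. -/
def algOp {idx : Type*} [Fintype idx] [DecidableEq idx] {N : ℕ}
    (A : ℕ → Matrix idx idx ℂ) (orc : Matrix (idx × Fin N) (idx × Fin N) ℂ) :
    ℕ → Matrix (idx × Fin N) (idx × Fin N) ℂ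
  | 0 => A 0 ⊗ₖ (1 : Matrix (Fin N) (Fin N) ℂ)
  | q + 1 => (A (q + 1) ⊗ₖ (1 : Matrix (Fin N) (Fin N) ℂ)) * orc * algOp A orc q

end

/-!
The oracle factors as `c𝔘 = (1 - C) ⊗ 1 + C ⊗ Z`, where `C = (|1⟩⟨1| ⊗ P_u) ⊗ id_W` is a star
projection and `Z = diag(ω^y)` is the clock matrix, which shifts the Fourier basis:
`Z k̂ = (k+1)̂`. Hence each query raises the highest Fourier mode of the register by at most
one, while the `A_i ⊗ id` do not touch the register, so after `q` queries the state lies in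
`H ⊗ span {0̂, …, q̂}`. For `q < N` these modes are orthonormal, and all the operators are
unitary, so the components `χ_k` of the state satisfy `∑ ‖χ_k‖² = 1`; normalising them gives
`α_k` and `ψ_k`.
-/

open scoped Kronecker
open Finset

section Tensor

variable {ι κ : Type*} [Fintype ι] [Fintype κ]

@[simp]
lemma tp_apply (x : EuclideanSpace ℂ ι) (z : EuclideanSpace ℂ κ) (p : ι × κ) :
    tp x z p = x p.1 * z p.2 := rfl

@[simp]
lemma tp_zero_left (z : EuclideanSpace ℂ κ) : tp (0 : EuclideanSpace ℂ ι) z = 0 := by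
  ext; simp

lemma tp_add_left (x x' : EuclideanSpace ℂ ι) (z : EuclideanSpace ℂ κ) :
    tp (x + x') z = tp x z + tp x' z := by
  ext; simp [add_mul]

lemma tp_smul_left (c : ℂ) (x : EuclideanSpace ℂ ι) (z : EuclideanSpace ℂ κ) :
    tp (c • x) z = c • tp x z := by
  ext; simp [mul_assoc]

lemma inner_tp (x x' : EuclideanSpace ℂ ι) (z z' : EuclideanSpace ℂ κ) :
    inner ℂ (tp x z) (tp x' z') = inner ℂ x x' * inner ℂ z z' := by
  simp only [PiLp.inner_apply, RCLike.inner_apply, tp_apply, Fintype.sum_prod_type,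
    Finset.sum_mul_sum, map_mul]
  exact Finset.sum_congr rfl fun _ _ => Finset.sum_congr rfl fun _ _ => by ring

lemma norm_tp (x : EuclideanSpace ℂ ι) (z : EuclideanSpace ℂ κ) : ‖tp x z‖ = ‖x‖ * ‖z‖ := by
  simp only [EuclideanSpace.norm_eq, tp_apply, norm_mul, mul_pow, Fintype.sum_prod_type,
    ← Finset.sum_mul_sum]
  exact Real.sqrt_mul (Finset.sum_nonneg fun _ _ => by positivity) _

lemma norm_sq_sum_tp_of_orthonormal {β : Type*} {e : β → EuclideanSpace ℂ κ}
    (he : Orthonormal ℂ e) (s : Finset β) (χ : β → EuclideanSpace ℂ ι) :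
    ‖∑ k ∈ s, tp (χ k) (e k)‖ ^ 2 = ∑ k ∈ s, ‖χ k‖ ^ 2 := by
  classical
  simp only [← inner_self_eq_norm_sq (𝕜 := ℂ), sum_inner, inner_sum, inner_tp,
    orthonormal_iff_ite.mp he, mul_ite, mul_one, mul_zero]
  simp [Finset.sum_ite_eq']

lemma toEuclideanLin_kronecker_tp [DecidableEq ι] [DecidableEq κ]
    (M : Matrix ι ι ℂ) (P : Matrix κ κ ℂ) (x : EuclideanSpace ℂ ι) (z : EuclideanSpace ℂ κ) :
    Matrix.toEuclideanLin (M ⊗ₖ P) (tp x z)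
      = tp (Matrix.toEuclideanLin M x) (Matrix.toEuclideanLin P z) := by
  ext p
  simp only [Matrix.toLpLin_apply, tp_apply, PiLp.toLp_apply, Matrix.mulVec, dotProduct,
    Matrix.kroneckerMap_apply, Fintype.sum_prod_type, Finset.sum_mul_sum]
  exact Finset.sum_congr rfl fun _ _ => Finset.sum_congr rfl fun _ _ => by ring

end Tensor

section Fourier

variable {N : ℕ} [NeZero N]

lemma isPrimitiveRoot_ω : IsPrimitiveRoot (ω N) N :=
  Complex.isPrimitiveRoot_exp N (NeZero.ne N)

lemma norm_ω : ‖ω N‖ = 1 := isPrimitiveRoot_ω.norm'_eq_one (NeZero.ne N)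

omit [NeZero N] in
lemma fHat_apply (k y : Fin N) : fHat N k y = (Real.sqrt N : ℂ)⁻¹ * ω N ^ ((k : ℕ) * y) := by
  simp [fHat, e, Pi.single_apply]

lemma inner_fHat (k l : Fin N) :
    inner ℂ (fHat N k) (fHat N l) = (N : ℂ)⁻¹ * ∑ y : Fin N, (ω N ^ ((l : ℤ) - k)) ^ (y : ℕ) := by
  have hconj : starRingEnd ℂ (ω N) = (ω N)⁻¹ := (RCLike.inv_eq_conj norm_ω).symm
  have hsqrt : ((√N : ℝ) : ℂ)⁻¹ * ((√N : ℝ) : ℂ)⁻¹ = (N : ℂ)⁻¹ := by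
    rw [← mul_inv, ← Complex.ofReal_mul, Real.mul_self_sqrt (Nat.cast_nonneg _)]
    push_cast
    rfl
  simp only [PiLp.inner_apply, RCLike.inner_apply, fHat_apply, map_mul, map_inv₀,
    Complex.conj_ofReal, map_pow, hconj, Finset.mul_sum]
  refine Finset.sum_congr rfl fun y _ => ?_
  rw [← hsqrt, ← zpow_natCast, ← zpow_natCast, ← zpow_natCast, _root_.inv_zpow',
    ← _root_.zpow_mul,
    show ((l : ℤ) - k) * (y : ℕ) = ((l * y : ℕ) : ℤ) + -((k * y : ℕ) : ℤ) by push_cast; ring,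
    zpow_add₀ (isPrimitiveRoot_ω.ne_zero (NeZero.ne N))]
  ring

lemma orthonormal_fHat : Orthonormal ℂ (fHat N) := by
  rw [orthonormal_iff_ite]
  intro k l
  rw [inner_fHat]
  split_ifs with hkl
  · subst hkl
    simp [NeZero.ne N]
  · set r := ω N ^ ((l : ℤ) - k)
    have hr : r ≠ 1 := by
      rw [Ne, isPrimitiveRoot_ω.zpow_eq_one_iff_dvd]
      intro hdvd
      have hk := k.isLt
      have hl := l.isLt
      have := Int.eq_zero_of_abs_lt_dvd hdvd (abs_lt.mpr ⟨by omega, by omega⟩)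
      exact hkl (Fin.ext (by omega))
    have hrN : r ^ N = 1 := by
      rw [← zpow_natCast, ← _root_.zpow_mul, mul_comm, _root_.zpow_mul, zpow_natCast,
        isPrimitiveRoot_ω.pow_eq_one, _root_.one_zpow]
    rw [Fin.sum_univ_eq_sum_range (r ^ ·), geom_sum_eq hr, hrN]
    simp

end Fourier

section StarProjection

variable {R m n : Type*} [CommRing R] [StarRing R] [Fintype m] [Fintype n]

lemma IsStarProjection.kronecker {A : Matrix m m R} {B : Matrix n n R}
    (hA : IsStarProjection A) (hB : IsStarProjection B) : IsStarProjection (A ⊗ₖ B) := by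
  rw [isStarProjection_iff'] at *
  rw [← Matrix.mul_kronecker_mul, hA.1, hB.1, Matrix.star_eq_conjTranspose,
    Matrix.conjTranspose_kronecker, ← Matrix.star_eq_conjTranspose,
    ← Matrix.star_eq_conjTranspose, hA.2, hB.2]
  exact ⟨rfl, rfl⟩

lemma isStarProjection_single [DecidableEq m] (i : m) :
    IsStarProjection (Matrix.single i i (1 : R)) := by
  rw [isStarProjection_iff', Matrix.single_mul_single_same, one_mul, Matrix.star_eq_conjTranspose]
  simp

lemma one_sub_kronecker_one_add_kronecker_mem_unitaryGroup [DecidableEq m] [DecidableEq n]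
    {C : Matrix m m R} {D : Matrix n n R}
    (hC : IsStarProjection C) (hD : D ∈ Matrix.unitaryGroup n R) :
    (1 - C) ⊗ₖ (1 : Matrix n n R) + C ⊗ₖ D ∈ Matrix.unitaryGroup (m × n) R := by
  rw [Matrix.mem_unitaryGroup_iff', star_add, Matrix.star_eq_conjTranspose,
    Matrix.star_eq_conjTranspose, Matrix.conjTranspose_kronecker, Matrix.conjTranspose_kronecker,
    Matrix.conjTranspose_one, Matrix.conjTranspose_sub, Matrix.conjTranspose_one,
    ← Matrix.star_eq_conjTranspose C, hC.isSelfAdjoint.star_eq, add_mul, mul_add, mul_add,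
    ← Matrix.mul_kronecker_mul, ← Matrix.mul_kronecker_mul, ← Matrix.mul_kronecker_mul,
    ← Matrix.mul_kronecker_mul, hC.mul_one_sub_self, hC.one_sub_mul_self,
    hC.isIdempotentElem.eq, hC.one_sub.isIdempotentElem.eq, ← Matrix.star_eq_conjTranspose,
    Matrix.mem_unitaryGroup_iff'.mp hD]
  simp [← Matrix.add_kronecker]

end StarProjection

lemma norm_toEuclideanLin_of_mem_unitaryGroup {n : Type*} [Fintype n] [DecidableEq n]
    {U : Matrix n n ℂ} (hU : U ∈ Matrix.unitaryGroup n ℂ) (x : EuclideanSpace ℂ n) :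
    ‖Matrix.toEuclideanLin U x‖ = ‖x‖ :=
  ContinuousLinearMap.norm_map_of_mem_unitary
    (Unitary.map_mem (Matrix.toEuclideanCLM (n := n) (𝕜 := ℂ)) hU) x

lemma sum_kronecker_single {R ι κ : Type*} [CommSemiring R] [Fintype κ] [DecidableEq κ]
    (B C : Matrix ι ι R) (f : κ → R) :
    ∑ y, (B + f y • C) ⊗ₖ Matrix.single y y 1 = B ⊗ₖ 1 + C ⊗ₖ Matrix.diagonal f := by
  ext ⟨i, a⟩ ⟨j, b⟩
  simp only [Matrix.sum_apply, Matrix.kroneckerMap_apply, Matrix.add_apply, Matrix.smul_apply,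
    Matrix.single_apply, Matrix.diagonal_apply, Matrix.one_apply]
  by_cases hab : a = b
  · subst hab
    simp [mul_comm]
  · simp only [if_neg hab, mul_zero, add_zero]
    refine Finset.sum_eq_zero fun c _ => ?_
    rw [if_neg (by rintro ⟨rfl, rfl⟩; exact hab rfl), mul_zero]

section Oracle

variable {ιV ιW : Type*} [Fintype ιV] [DecidableEq ιV] [Fintype ιW] [DecidableEq ιW]

noncomputable def clock (N : ℕ) : Matrix (Fin N) (Fin N) ℂ :=
  Matrix.diagonal fun y => ω N ^ (y : ℕ)

noncomputable def controlledProj (u : EuclideanSpace ℂ ιV) (ιW : Type*) [Fintype ιW]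
    [DecidableEq ιW] : Matrix ((Fin 2 × ιV) × ιW) ((Fin 2 × ιV) × ιW) ℂ :=
  (Matrix.single 1 1 1 ⊗ₖ PuM u) ⊗ₖ (1 : Matrix ιW ιW ℂ)

omit [DecidableEq ιV] in
lemma isStarProjection_PuM {u : EuclideanSpace ℂ ιV} (hu : ‖u‖ = 1) :
    IsStarProjection (PuM u) := by
  have hu' : ∑ k, star (u k) * u k = 1 := by
    have h := inner_self_eq_norm_sq_to_K (𝕜 := ℂ) u
    rw [hu, PiLp.inner_apply] at h
    simpa [Complex.conj_mul'] using h
  rw [isStarProjection_iff']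
  constructor
  · ext i j
    simp only [PuM, Matrix.mul_apply, Matrix.of_apply]
    simp_rw [show ∀ k, u i * star (u k) * (u k * star (u j))
      = u i * star (u j) * (star (u k) * u k) from fun k => by ring, ← Finset.mul_sum, hu',
      mul_one]
  · ext i j
    simp [PuM, mul_comm]

omit [Fintype ιV] in
lemma cUyM_kronecker_one (N : ℕ) (u : EuclideanSpace ℂ ιV) (y : Fin N) :
    cUyM N u y ⊗ₖ (1 : Matrix ιW ιW ℂ)
      = 1 - controlledProj u ιW + ω N ^ (y : ℕ) • controlledProj u ιW := by
  ext ⟨⟨a, i⟩, w⟩ ⟨⟨b, j⟩, w'⟩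
  fin_cases a <;> fin_cases b <;> simp [cUyM, UyM, controlledProj, Matrix.one_apply]
  all_goals split_ifs <;> simp_all <;> ring

omit [Fintype ιV] in
lemma oracleM_eq (N : ℕ) (u : EuclideanSpace ℂ ιV) :
    oracleM N u ιW = (1 - controlledProj u ιW) ⊗ₖ (1 : Matrix (Fin N) (Fin N) ℂ)
      + controlledProj u ιW ⊗ₖ clock N := by
  simp only [oracleM, cUyM_kronecker_one, sum_kronecker_single, clock]

variable {N : ℕ} [NeZero N]

lemma clock_mem_unitaryGroup : clock N ∈ Matrix.unitaryGroup (Fin N) ℂ := by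
  rw [Matrix.mem_unitaryGroup_iff', clock, Matrix.star_eq_conjTranspose,
    Matrix.diagonal_conjTranspose, Matrix.diagonal_mul_diagonal, ← Matrix.diagonal_one]
  congr 1
  ext y
  rw [Pi.star_apply, RCLike.star_def, Complex.conj_mul', norm_pow, norm_ω]
  simp

lemma oracleM_mem_unitaryGroup {u : EuclideanSpace ℂ ιV} (hu : ‖u‖ = 1) :
    oracleM N u ιW ∈ Matrix.unitaryGroup (((Fin 2 × ιV) × ιW) × Fin N) ℂ := by
  rw [oracleM_eq]
  exact one_sub_kronecker_one_add_kronecker_mem_unitaryGroup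
    (((isStarProjection_single 1).kronecker (isStarProjection_PuM hu)).kronecker
      (IsStarProjection.one _))
    clock_mem_unitaryGroup

end Oracle

lemma algOp_mem_unitaryGroup {idx : Type*} [Fintype idx] [DecidableEq idx] {N : ℕ}
    {A : ℕ → Matrix idx idx ℂ} (hA : ∀ i, A i ∈ Matrix.unitaryGroup idx ℂ)
    {orc : Matrix (idx × Fin N) (idx × Fin N) ℂ}
    (horc : orc ∈ Matrix.unitaryGroup (idx × Fin N) ℂ) (n : ℕ) :
    algOp A orc n ∈ Matrix.unitaryGroup (idx × Fin N) ℂ := by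
  induction n with
  | zero => exact Matrix.kronecker_mem_unitary (hA 0) (one_mem _)
  | succ n ih =>
    exact mul_mem (mul_mem (Matrix.kronecker_mem_unitary (hA (n + 1)) (one_mem _)) horc) ih

section FourierLevel

open Fin.NatCast

/-- `H ⊗ span {0̂, …, n̂}`. The Fourier index `k : ℕ` is read modulo `N`, so this is all of
the space once `n + 1 ≥ N`. -/
noncomputable def fourierLevel (ι : Type*) [Fintype ι] (N : ℕ) [NeZero N] (n : ℕ) :
    Submodule ℂ (EuclideanSpace ℂ (ι × Fin N)) :=
  Submodule.span ℂ {v | ∃ x k, k ≤ n ∧ tp x (fHat N k) = v}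

variable {N : ℕ} [NeZero N]

lemma fHat_natCast_apply (m : ℕ) (y : Fin N) :
    fHat N m y = (Real.sqrt N : ℂ)⁻¹ * ω N ^ (m * y) := by
  rw [fHat_apply, Fin.val_natCast]
  congr 1
  exact pow_eq_pow_of_modEq ((Nat.mod_modEq m N).mul_right _) isPrimitiveRoot_ω.pow_eq_one

lemma toEuclideanLin_clock_fHat (m : ℕ) :
    Matrix.toEuclideanLin (clock N) (fHat N m) = fHat N (m + 1 : ℕ) := by
  ext y
  simp only [clock, Matrix.ofLp_toLpLin, Matrix.toLin'_apply, Matrix.mulVec_diagonal,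
    fHat_natCast_apply]
  ring

variable {ι : Type*} [Fintype ι]

lemma tp_mem_fourierLevel {n k : ℕ} (hk : k ≤ n) (x : EuclideanSpace ℂ ι) :
    tp x (fHat N k) ∈ fourierLevel ι N n :=
  Submodule.subset_span ⟨x, k, hk, rfl⟩

lemma fourierLevel_le_comap_kronecker_one [DecidableEq ι] (M : Matrix ι ι ℂ) (n : ℕ) :
    fourierLevel ι N n ≤ (fourierLevel ι N n).comap
      (Matrix.toEuclideanLin (M ⊗ₖ (1 : Matrix (Fin N) (Fin N) ℂ))) := by
  refine Submodule.span_le.mpr ?_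
  rintro _ ⟨x, k, hk, rfl⟩
  rw [SetLike.mem_coe, Submodule.mem_comap, toEuclideanLin_kronecker_tp, Matrix.toLpLin_one,
    LinearMap.id_apply]
  exact tp_mem_fourierLevel hk _

lemma fourierLevel_le_comap_clock [DecidableEq ι] (C : Matrix ι ι ℂ) (n : ℕ) :
    fourierLevel ι N n ≤ (fourierLevel ι N (n + 1)).comap
      (Matrix.toEuclideanLin ((1 - C) ⊗ₖ (1 : Matrix (Fin N) (Fin N) ℂ) + C ⊗ₖ clock N)) := by
  refine Submodule.span_le.mpr ?_
  rintro _ ⟨x, k, hk, rfl⟩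
  rw [SetLike.mem_coe, Submodule.mem_comap, map_add, LinearMap.add_apply,
    toEuclideanLin_kronecker_tp, toEuclideanLin_kronecker_tp, Matrix.toLpLin_one,
    LinearMap.id_apply, toEuclideanLin_clock_fHat]
  exact add_mem (tp_mem_fourierLevel (by omega) _) (tp_mem_fourierLevel (by omega) _)

lemma fourierLevel_le_comap_oracleM {ιV ιW : Type*} [Fintype ιV] [DecidableEq ιV] [Fintype ιW]
    [DecidableEq ιW] (u : EuclideanSpace ℂ ιV) (n : ℕ) :
    fourierLevel ((Fin 2 × ιV) × ιW) N n
      ≤ (fourierLevel _ N (n + 1)).comap (Matrix.toEuclideanLin (oracleM N u ιW)) := by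
  rw [oracleM_eq]
  exact fourierLevel_le_comap_clock _ n

lemma algOp_apply_mem_fourierLevel [DecidableEq ι] (A : ℕ → Matrix ι ι ℂ)
    {orc : Matrix (ι × Fin N) (ι × Fin N) ℂ}
    (horc : ∀ n, fourierLevel ι N n ≤ (fourierLevel ι N (n + 1)).comap (Matrix.toEuclideanLin orc))
    (x : EuclideanSpace ℂ ι) (n : ℕ) :
    Matrix.toEuclideanLin (algOp A orc n) (tp x (fHat N 0)) ∈ fourierLevel ι N n := by
  induction n with
  | zero =>
    refine fourierLevel_le_comap_kronecker_one (A 0) 0 ?_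
    have h := tp_mem_fourierLevel (N := N) (le_refl 0) x
    rwa [show ((0 : ℕ) : Fin N) = 0 from Fin.ext (Nat.zero_mod N)] at h
  | succ n ih =>
    simp only [algOp, Matrix.toLpLin_mul_same, LinearMap.comp_apply]
    exact fourierLevel_le_comap_kronecker_one _ _ (horc n ih)

lemma exists_eq_sum_tp_of_mem_fourierLevel {n : ℕ} (hn : n + 1 ≤ N)
    {v : EuclideanSpace ℂ (ι × Fin N)} (hv : v ∈ fourierLevel ι N n) :
    ∃ χ : Fin (n + 1) → EuclideanSpace ℂ ι, v = ∑ k, tp (χ k) (fHat N (Fin.castLE hn k)) := by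
  induction hv using Submodule.span_induction with
  | mem v hv =>
    obtain ⟨x, k, hk, rfl⟩ := hv
    refine ⟨Pi.single ⟨k, by omega⟩ x, ?_⟩
    rw [Finset.sum_eq_single ⟨k, by omega⟩ (fun j _ hj => by simp [hj]) (by simp),
      Pi.single_eq_same]
    congr
    ext
    simp [Fin.val_natCast, Nat.mod_eq_of_lt (show k < N by omega)]
  | zero => exact ⟨0, by simp⟩
  | add v w _ _ hv hw =>
    obtain ⟨χ, rfl⟩ := hv
    obtain ⟨ψ, rfl⟩ := hw
    exact ⟨χ + ψ, by simp [tp_add_left, Finset.sum_add_distrib]⟩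
  | smul c v _ hv =>
    obtain ⟨χ, rfl⟩ := hv
    exact ⟨c • χ, by simp [tp_smul_left, Finset.smul_sum]⟩

end FourierLevel

lemma exists_eq_smul_of_norm_eq_one {E : Type*} [NormedAddCommGroup E] [NormedSpace ℂ E]
    {φ : E} (hφ : ‖φ‖ = 1) (x : E) : ∃ (a : ℂ) (ψ : E), ‖ψ‖ = 1 ∧ ‖a‖ = ‖x‖ ∧ x = a • ψ := by
  by_cases hx : x = 0
  · exact ⟨0, φ, hφ, by simp [hx], by simp [hx]⟩
  · refine ⟨‖x‖, (‖x‖⁻¹ : ℂ) • x, norm_smul_inv_norm hx, by simp, ?_⟩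
    rw [smul_smul, mul_inv_cancel₀ (by simpa using hx), one_smul]

/-- **Sparse representation of the final state.**  For a `q`-query algorithm with
`0 ≤ q ≤ N-1`, the final state
`ψ = (A_q ⊗ id) c𝔘 (A_{q-1} ⊗ id) ⋯ c𝔘 (A_0 ⊗ id) (φ₀ ⊗ 0̂)`
can be written as `ψ = ∑_{k=0}^q α_k • (ψ_k ⊗ k̂)` with unit vectors `ψ_k ∈ H` and
coefficients satisfying `∑_k |α_k|² = 1`. -/
theorem stmt_7 {ιV ιW : Type*} [Fintype ιV] [DecidableEq ιV] [Fintype ιW] [DecidableEq ιW]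
    {N : ℕ} [NeZero N] (u : EuclideanSpace ℂ ιV) (hu : ‖u‖ = 1)
    {q : ℕ} (hq : q + 1 ≤ N)
    (A : ℕ → Matrix ((Fin 2 × ιV) × ιW) ((Fin 2 × ιV) × ιW) ℂ)
    (hA : ∀ i, A i ∈ Matrix.unitaryGroup ((Fin 2 × ιV) × ιW) ℂ)
    (φ₀ : EuclideanSpace ℂ ((Fin 2 × ιV) × ιW)) (hφ₀ : ‖φ₀‖ = 1) :
    ∃ (α : Fin (q + 1) → ℂ) (ψk : Fin (q + 1) → EuclideanSpace ℂ ((Fin 2 × ιV) × ιW)),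
      (∀ k, ‖ψk k‖ = 1) ∧ (∑ k, ‖α k‖ ^ 2 = 1) ∧
      Matrix.toEuclideanLin (algOp A (oracleM N u ιW) q) (tp φ₀ (fHat N 0))
        = ∑ k : Fin (q + 1), α k • tp (ψk k) (fHat N (Fin.castLE hq k)) := by
  have hlevel := algOp_apply_mem_fourierLevel A (fourierLevel_le_comap_oracleM (N := N) u) φ₀ q
  obtain ⟨χ, hχ⟩ := exists_eq_sum_tp_of_mem_fourierLevel hq hlevel
  have hnorm : ∑ k, ‖χ k‖ ^ 2 = 1 := by
    have hpyth := norm_sq_sum_tp_of_orthonormal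
      (orthonormal_fHat.comp _ (Fin.castLE_injective hq)) univ χ
    rw [Function.comp_def] at hpyth
    rw [← hpyth, ← hχ, norm_toEuclideanLin_of_mem_unitaryGroup
        (algOp_mem_unitaryGroup hA (oracleM_mem_unitaryGroup hu) q),
      norm_tp, hφ₀, orthonormal_fHat.1 0]
    norm_num
  choose α ψ hψ hα hχα using fun k => exists_eq_smul_of_norm_eq_one hφ₀ (χ k)
  refine ⟨α, ψ, hψ, by simpa only [hα] using hnorm, ?_⟩
  simp only [hχ, hχα, tp_smul_left]
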